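/- Let U be a periodic string with per(U) ≥ 2τ. If each of the positions i in the first per(U) positions of an occurrence of U in T such that the length-2τ fragment at i belongs to a fixed set of 'marked' length-2τ strings is well-defined consistently (i.e., membership depends only on T[i..i+2τ)), and the set of such positions within the first per(U) positions is non-empty, then the position i among them minimizing the suffix T[i..n) lexicographically determines a rotation T[i..i+per(U)) of the primitive root of U that depends only on the string U (not on its occurrence position). -/

import Mathlib

open List

variable {α : Type*}

/-- `frag T a b` is the fragment `T[a..b]` (inclusive, 0-based). -/
def frag (T : List α) (a b : ℕ) : List α := (T.drop a).take (b + 1 - a)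

/-- `p` is a period of `S`: `0 < p ≤ |S|` and `S[i] = S[i+p]` for all valid `i`. -/
def IsPeriodOf (p : ℕ) (S : List α) : Prop :=
  0 < p ∧ p ≤ S.length ∧ ∀ i : ℕ, i + p < S.length → S[i]? = S[i + p]?

/-- The smallest period of `S`. -/
noncomputable def minPeriod (S : List α) : ℕ := sInf {p | IsPeriodOf p S}

/-- `T[a..b]` is a run: periodic (its smallest period occurs at least twice)
and maximal on both sides. -/
def IsRun (T : List α) (a b : ℕ) : Prop :=
  a ≤ b ∧ b < T.length ∧
  2 * minPeriod (frag T a b) ≤ b + 1 - a ∧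
  (a = 0 ∨ T[a - 1]? ≠ T[a - 1 + minPeriod (frag T a b)]?) ∧
  (b = T.length - 1 ∨ T[b + 1]? ≠ T[b + 1 - minPeriod (frag T a b)]?)

/-- `W` occurs in `T` at position `s`. -/
def OccursAt (T : List α) (s : ℕ) (W : List α) : Prop :=
  s + W.length ≤ T.length ∧ (T.drop s).take W.length = W

/-- The set of distinct square substrings of `T`. -/
def Squares (T : List α) : Set (List α) :=
  {W | ∃ X : List α, X ≠ [] ∧ W = X ++ X ∧ W <:+: T}

/-- A non-empty string is primitive if it is not a proper power. -/
def Primitive (U : List α) : Prop :=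
  U ≠ [] ∧ ∀ (V : List α) (k : ℕ), U = (List.replicate k V).flatten → k = 1

/-- Cyclic rotation moving the first `c` characters to the end. -/
def rot (c : ℕ) (L : List α) : List α := L.drop c ++ L.take c

/-- `lam` is the Lyndon root of a periodic string `S`: the lexicographically
smallest rotation of `S[0..per(S))`. -/
def LyndonRootOf [LinearOrder α] (S lam : List α) : Prop :=
  (∃ c < minPeriod S, lam = rot c (S.take (minPeriod S))) ∧
  ∀ c < minPeriod S, lam ≤ rot c (S.take (minPeriod S))

/-- Squares generated by a periodic string `U`: squares contained in `U`
whose smallest period equals that of `U`. -/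
def FragSquares (U : List α) : Set (List α) :=
  {W | ∃ X : List α, X ≠ [] ∧ W = X ++ X ∧ W <:+: U ∧ minPeriod W = minPeriod U}

/-- `subper U`: the minimum of `per(X)` over squares `X²` generated by `U`. -/
noncomputable def subper (U : List α) : ℕ :=
  sInf {q | ∃ X : List α, X ≠ [] ∧ (X ++ X) <:+: U ∧
    minPeriod (X ++ X) = minPeriod U ∧ minPeriod X = q}

/-- Fragments `[a..b]` and `[a'..b']` are neighboring:
`[a-1..b+1] ∩ [a'..b'] ≠ ∅`. -/
def Neighboring (a b a' b' : ℕ) : Prop := a ≤ b' + 1 ∧ a' ≤ b + 1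

/-- `T[x..y]` is a layer of the pyramid of the neighboring runs
`F = T[a..b]` and `F' = T[a'..b']` (with `a < a'`): a subperiodic run `R`
with `subper(R) = per(F)` such that `R ∩ (F ∪ F')` is periodic with
period `per(R)`. -/
def IsLayer (T : List α) (a b a' b' x y : ℕ) : Prop :=
  IsRun T x y ∧
  4 * subper (frag T x y) ≤ minPeriod (frag T x y) ∧
  subper (frag T x y) = minPeriod (frag T a b) ∧
  2 * minPeriod (frag T x y) ≤ min y b' + 1 - max x a ∧
  IsPeriodOf (minPeriod (frag T x y)) (frag T (max x a) (min y b'))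

/-- A `τ`-synchronizing set of `T` (Kempa–Kociumaka): consistency and density. -/
def SyncSet (T : List α) (τ : ℕ) (S : Set ℕ) : Prop :=
  (∀ i ∈ S, i + 2 * τ ≤ T.length) ∧
  (∀ i j : ℕ, i + 2 * τ ≤ T.length → j + 2 * τ ≤ T.length →
    (T.drop i).take (2 * τ) = (T.drop j).take (2 * τ) → (i ∈ S ↔ j ∈ S)) ∧
  (∀ i : ℕ, i + 3 * τ - 1 ≤ T.length →
    ((∀ k ∈ S, k < i ∨ i + τ ≤ k) ↔
      3 * minPeriod ((T.drop i).take (3 * τ - 1)) ≤ τ))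

theorem List.Lex.append_of_length_eq {r : α → α → Prop} {A B : List α} (h : List.Lex r A B)
    (hlen : A.length = B.length) (s t : List α) : List.Lex r (A ++ s) (B ++ t) := by
  induction h with
  | nil => simp at hlen
  | cons _ ih => exact .cons (ih (by simpa using hlen))
  | rel h => exact .rel h

theorem List.lt_of_take_lt [LT α] {X Y : List α} {n : ℕ} (hX : n ≤ X.length)
    (hY : n ≤ Y.length) (h : X.take n < Y.take n) : X < Y := by
  have := Lex.append_of_length_eq h (by simp [hX, hY]) (X.drop n) (Y.drop n)
  rwa [take_append_drop, take_append_drop] at this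

theorem OccursAt.take_drop_eq {T U : List α} {s i m : ℕ} (ho : OccursAt T s U) (hsi : s ≤ i)
    (hm : i - s + m ≤ U.length) : (T.drop i).take m = (U.drop (i - s)).take m := by
  obtain ⟨-, hU⟩ := ho
  conv_rhs => rw [← hU, drop_take, drop_drop, take_take, Nat.add_sub_cancel' hsi]
  rw [Nat.min_eq_left (by omega)]

def IsMinMarked [LinearOrder α] (T : List α) (M : Set (List α)) (k p s i : ℕ) : Prop :=
  (s ≤ i ∧ i < s + p ∧ i + k ≤ T.length ∧ (T.drop i).take k ∈ M) ∧
    ∀ j : ℕ, s ≤ j → j < s + p → j + k ≤ T.length → (T.drop j).take k ∈ M →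
      T.drop i ≤ T.drop j

namespace IsMinMarked

variable [LinearOrder α] {T U : List α} {M : Set (List α)} {k p s i : ℕ}

theorem window_mem (hi : IsMinMarked T M k p s i) (ho : OccursAt T s U) (hk : k ≤ p)
    (hU : 2 * p ≤ U.length) : (U.drop (i - s)).take k ∈ M := by
  obtain ⟨⟨hsi, hip, -, hM⟩, -⟩ := hi
  rwa [← ho.take_drop_eq hsi (by omega)]

/-- Whether offset `c` is marked depends only on `U`, so `s + c` competes with `i`; and as `U` is
long enough, the suffixes at `s + c` and `i` are compared on their length-`p` windows of `U`. -/
theorem rotation_le (hi : IsMinMarked T M k p s i) (ho : OccursAt T s U) (hk : k ≤ p)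
    (hU : 2 * p ≤ U.length) {c : ℕ} (hc : c < p) (hcM : (U.drop c).take k ∈ M) :
    (U.drop (i - s)).take p ≤ (U.drop c).take p := by
  obtain ⟨⟨hsi, hip, -, -⟩, hmin⟩ := hi
  have hT := ho.1
  have window (m : ℕ) (hm : c + m ≤ U.length) :
      (T.drop (s + c)).take m = (U.drop c).take m := by
    simpa using ho.take_drop_eq (i := s + c) (by omega) (by simpa using hm)
  by_contra! hlt
  refine not_lt.2 (hmin (s + c) (by omega) (by omega) (by omega) (by rwa [window k (by omega)])) ?_
  refine lt_of_take_lt (n := p) (by simp only [length_drop]; omega)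
    (by simp only [length_drop]; omega) ?_
  rwa [window p (by omega), ho.take_drop_eq hsi (by omega)]

end IsMinMarked

theorem marked_min_suffix_rotation_general [LinearOrder α] (T U : List α)
    (τ : ℕ) (M : Set (List α)) (s₁ s₂ i₁ i₂ : ℕ)
    (hUper : 2 * minPeriod U ≤ U.length)
    (hp : 2 * τ ≤ minPeriod U)
    (ho₁ : OccursAt T s₁ U) (ho₂ : OccursAt T s₂ U)
    (hm₁ : (s₁ ≤ i₁ ∧ i₁ < s₁ + minPeriod U ∧ i₁ + 2 * τ ≤ T.length ∧
        (T.drop i₁).take (2 * τ) ∈ M) ∧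
      ∀ j : ℕ, s₁ ≤ j → j < s₁ + minPeriod U → j + 2 * τ ≤ T.length →
        (T.drop j).take (2 * τ) ∈ M → T.drop i₁ ≤ T.drop j)
    (hm₂ : (s₂ ≤ i₂ ∧ i₂ < s₂ + minPeriod U ∧ i₂ + 2 * τ ≤ T.length ∧
        (T.drop i₂).take (2 * τ) ∈ M) ∧
      ∀ j : ℕ, s₂ ≤ j → j < s₂ + minPeriod U → j + 2 * τ ≤ T.length →
        (T.drop j).take (2 * τ) ∈ M → T.drop i₂ ≤ T.drop j) :
    (T.drop i₁).take (minPeriod U) = (T.drop i₂).take (minPeriod U) := by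
  have h₁ : IsMinMarked T M (2 * τ) (minPeriod U) s₁ i₁ := hm₁
  have h₂ : IsMinMarked T M (2 * τ) (minPeriod U) s₂ i₂ := hm₂
  have hc₁ : i₁ - s₁ < minPeriod U := by omega
  have hc₂ : i₂ - s₂ < minPeriod U := by omega
  rw [ho₁.take_drop_eq hm₁.1.1 (by omega), ho₂.take_drop_eq hm₂.1.1 (by omega)]
  exact le_antisymm
    (h₁.rotation_le ho₁ hp hUper hc₂ (h₂.window_mem ho₂ hp hUper))
    (h₂.rotation_le ho₂ hp hUper hc₁ (h₁.window_mem ho₁ hp hUper))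

/-- Consistent marking determines a rotation of the primitive root: for two
occurrences of a periodic string `U` in `T`, the marked position in the first
`per(U)` positions minimizing the suffix lexicographically determines the same
length-`per(U)` rotation, provided markedness depends only on the length-`2τ`
fragment at the position. -/
theorem marked_min_suffix_rotation [LinearOrder α] (T U : List α)
    (τ : ℕ) (M : Set (List α)) (s₁ s₂ i₁ i₂ : ℕ)
    (hτ : 1 ≤ τ)
    (hUper : 2 * minPeriod U ≤ U.length)
    (hp : 2 * τ ≤ minPeriod U)
    (ho₁ : OccursAt T s₁ U) (ho₂ : OccursAt T s₂ U)
    (hm₁ : (s₁ ≤ i₁ ∧ i₁ < s₁ + minPeriod U ∧ i₁ + 2 * τ ≤ T.length ∧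
        (T.drop i₁).take (2 * τ) ∈ M) ∧
      ∀ j : ℕ, s₁ ≤ j → j < s₁ + minPeriod U → j + 2 * τ ≤ T.length →
        (T.drop j).take (2 * τ) ∈ M → T.drop i₁ ≤ T.drop j)
    (hm₂ : (s₂ ≤ i₂ ∧ i₂ < s₂ + minPeriod U ∧ i₂ + 2 * τ ≤ T.length ∧
        (T.drop i₂).take (2 * τ) ∈ M) ∧
      ∀ j : ℕ, s₂ ≤ j → j < s₂ + minPeriod U → j + 2 * τ ≤ T.length →
        (T.drop j).take (2 * τ) ∈ M → T.drop i₂ ≤ T.drop j) :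
    (T.drop i₁).take (minPeriod U) = (T.drop i₂).take (minPeriod U) :=
  marked_min_suffix_rotation_general T U τ M s₁ s₂ i₁ i₂ hUper hp ho₁ ho₂ hm₁ hm₂
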